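/- Let D⋆ be a global minimizer of J̃ over K, set H⋆ = C − (1/2)[[A,D⋆],A], and let μ₁ ≤ ⋯ ≤ μ_M be the eigenvalues of H⋆ counted with multiplicity. If μ_m < μ_{m+1}, then P⋆ := 1_{(−∞,μ_m]}(H⋆) is the unique global minimizer of J̃ over K, P⋆ belongs to Gr(m,ℝ^M), and P⋆ is the unique global minimizer of J over Gr(m,ℝ^M). -/

import Mathlib

/-!
`J̃` is a convex quadratic on `K`: `J̃(D + X) = J̃(D) + Tr(H(D) X) + ¼‖[A,X]‖²` with
`H(D) = C − ½[[A,D],A]`, so `H⋆ = H(D⋆)`. Minimality of `D⋆` on the convex set `K` gives the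
variational inequality `Tr(H⋆ (D − D⋆)) ≥ 0` on `K`, while any other minimizer `D` has
`Tr(H⋆ (D − D⋆)) ≤ 0`. In an eigenbasis of `H⋆`, minimizing `D ↦ Tr(H⋆ D)` over `K` is a
fractional knapsack problem on the diagonal of `D`; under the gap `μ_m < μ_{m+1}` its unique
solution is `P⋆`, because a matrix `0 ⪯ D ⪯ I` with a `0/1` diagonal is that diagonal. Hence
`D⋆ = P⋆` and every minimizer equals `P⋆`. Finally `Gr ⊆ K` and `J̃ = J` on `Gr`.
-/

open Matrix Filter Topology

noncomputable section

/-- Commutator of matrices. -/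
def commut {M : ℕ} (X Y : Matrix (Fin M) (Fin M) ℝ) : Matrix (Fin M) (Fin M) ℝ :=
  X * Y - Y * X

/-- The Grassmann manifold `Gr(m, ℝ^M)`. -/
def Gr (M m : ℕ) (P : Matrix (Fin M) (Fin M) ℝ) : Prop :=
  P.IsSymm ∧ P * P = P ∧ P.trace = (m : ℝ)

/-- `K = CH(Gr(m,ℝ^M))`: symmetric `D` with `0 ⪯ D ⪯ I` and `Tr D = m`. -/
def Kset (M m : ℕ) (D : Matrix (Fin M) (Fin M) ℝ) : Prop :=
  D.PosSemidef ∧ (1 - D).PosSemidef ∧ D.trace = (m : ℝ)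

/-- The cost function `J(P) = Tr(BP) - (1/2) Tr(APAP)`. -/
def Jfun {M : ℕ} (A B P : Matrix (Fin M) (Fin M) ℝ) : ℝ :=
  (B * P).trace - (1 / 2) * (A * P * A * P).trace

/-- Squared Frobenius norm `‖X‖² = Tr(Xᵀ X)`. -/
def fnormSq {M : ℕ} (X : Matrix (Fin M) (Fin M) ℝ) : ℝ := (Xᵀ * X).trace

/-- The convexified functional `J̃(D) = Tr(CD) + (1/4)‖[A,D]‖²` with `C = B − (1/2)A²`. -/
def Jt {M : ℕ} (A B D : Matrix (Fin M) (Fin M) ℝ) : ℝ :=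
  ((B - (1 / 2 : ℝ) • (A * A)) * D).trace + (1 / 4) * fnormSq (commut A D)

/-- `μ` is the non-decreasing enumeration of the eigenvalues of `S`, with multiplicity. -/
def sortedEigs {M : ℕ} (S : Matrix (Fin M) (Fin M) ℝ) (μ : Fin M → ℝ) : Prop :=
  Monotone μ ∧ ∃ U : Matrix (Fin M) (Fin M) ℝ, U * Uᵀ = 1 ∧ S = U * Matrix.diagonal μ * Uᵀ

/-- `P = 1_{(-∞,t]}(S)`: the orthogonal projector onto the sum of the eigenspaces of the
symmetric matrix `S` associated with eigenvalues `≤ t`. -/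
def IsSpectralProjLE {M : ℕ} (S : Matrix (Fin M) (Fin M) ℝ) (t : ℝ)
    (P : Matrix (Fin M) (Fin M) ℝ) : Prop :=
  P.IsSymm ∧ P * P = P ∧ S * P = P * S ∧
  (∀ v : Fin M → ℝ, P.mulVec v = v → S.mulVec v ⬝ᵥ v ≤ t * (v ⬝ᵥ v)) ∧
  (∀ v : Fin M → ℝ, v ≠ 0 → P.mulVec v = 0 → t * (v ⬝ᵥ v) < S.mulVec v ⬝ᵥ v)

section Frobenius

variable {M : ℕ}

lemma fnormSq_nonneg (X : Matrix (Fin M) (Fin M) ℝ) : 0 ≤ fnormSq X := by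
  simpa [fnormSq] using (posSemidef_conjTranspose_mul_self X).trace_nonneg

lemma fnormSq_smul (c : ℝ) (X : Matrix (Fin M) (Fin M) ℝ) :
    fnormSq (c • X) = c ^ 2 * fnormSq X := by
  simp only [fnormSq, transpose_smul, Matrix.smul_mul, Matrix.mul_smul, smul_smul, trace_smul,
    smul_eq_mul, sq]

lemma fnormSq_add (X Y : Matrix (Fin M) (Fin M) ℝ) :
    fnormSq (X + Y) = fnormSq X + 2 * (Xᵀ * Y).trace + fnormSq Y := by
  have hswap : (Yᵀ * X).trace = (Xᵀ * Y).trace := by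
    rw [← trace_transpose, transpose_mul, transpose_transpose]
  simp only [fnormSq, transpose_add, add_mul, mul_add, trace_add, hswap]
  ring

lemma commut_add_right (A X Y : Matrix (Fin M) (Fin M) ℝ) :
    commut A (X + Y) = commut A X + commut A Y := by
  simp only [commut, mul_add, add_mul]
  abel

lemma commut_smul_right (A X : Matrix (Fin M) (Fin M) ℝ) (c : ℝ) :
    commut A (c • X) = c • commut A X := by
  simp only [commut, Matrix.mul_smul, Matrix.smul_mul, smul_sub]

lemma transpose_commut {A D : Matrix (Fin M) (Fin M) ℝ} (hA : A.IsSymm) (hD : D.IsSymm) :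
    (commut A D)ᵀ = -commut A D := by
  unfold commut
  rw [transpose_sub, transpose_mul, transpose_mul, hA.eq, hD.eq, neg_sub]

lemma trace_mul_commut (A C X : Matrix (Fin M) (Fin M) ℝ) :
    (C * commut A X).trace = (commut C A * X).trace := by
  simp only [commut, mul_sub, sub_mul, trace_sub, ← Matrix.mul_assoc]
  rw [trace_mul_cycle C X A]

lemma trace_transpose_commut_mul_commut {A D : Matrix (Fin M) (Fin M) ℝ} (hA : A.IsSymm)
    (hD : D.IsSymm) (X : Matrix (Fin M) (Fin M) ℝ) :
    ((commut A D)ᵀ * commut A X).trace = -(commut (commut A D) A * X).trace := by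
  rw [transpose_commut hA hD, neg_mul, trace_neg, trace_mul_commut]

end Frobenius

section Functional

variable {M : ℕ}

/-- The gradient of `J̃` at `D` for the trace pairing, so that `H⋆ = JtGrad A B D⋆`. -/
def JtGrad (A B D : Matrix (Fin M) (Fin M) ℝ) : Matrix (Fin M) (Fin M) ℝ :=
  (B - (1 / 2 : ℝ) • (A * A)) - (1 / 2 : ℝ) • commut (commut A D) A

lemma Jt_add {A D : Matrix (Fin M) (Fin M) ℝ} (hA : A.IsSymm) (hD : D.IsSymm)
    (B X : Matrix (Fin M) (Fin M) ℝ) :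
    Jt A B (D + X) = Jt A B D + (JtGrad A B D * X).trace + 1 / 4 * fnormSq (commut A X) := by
  rw [Jt, Jt, commut_add_right, fnormSq_add, trace_transpose_commut_mul_commut hA hD]
  simp only [JtGrad, mul_add, sub_mul, smul_mul_assoc, trace_add, trace_sub, trace_smul,
    smul_eq_mul]
  ring

lemma Jt_eq_Jfun_of_Gr {M m : ℕ} {A P : Matrix (Fin M) (Fin M) ℝ} (hA : A.IsSymm)
    (hP : Gr M m P) (B : Matrix (Fin M) (Fin M) ℝ) : Jt A B P = Jfun A B P := by
  obtain ⟨hPs, hPP, -⟩ := hP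
  have hnorm : fnormSq (commut A P) = -(commut (commut A P) A * P).trace :=
    trace_transpose_commut_mul_commut hA hPs P
  have hcyc : (P * (A * (A * P))).trace = (A * (A * P)).trace := by
    rw [trace_mul_comm, Matrix.mul_assoc, Matrix.mul_assoc, hPP]
  rw [Jt, Jfun, hnorm]
  simp only [commut, sub_mul, mul_sub, smul_mul_assoc, trace_sub, trace_smul, smul_eq_mul,
    Matrix.mul_assoc, hPP, hcyc]
  ring

end Functional

section ConvexHull

variable {M m : ℕ}

lemma Kset.isSymm {D : Matrix (Fin M) (Fin M) ℝ} (hD : Kset M m D) : D.IsSymm :=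
  isHermitian_iff_isSymm.mp hD.1.isHermitian

lemma posSemidef_of_isSymm_of_mul_self {P : Matrix (Fin M) (Fin M) ℝ} (hPs : P.IsSymm)
    (hPP : P * P = P) : P.PosSemidef := by
  simpa [hPs.eq, hPP] using posSemidef_conjTranspose_mul_self P

lemma Gr.kset {P : Matrix (Fin M) (Fin M) ℝ} (hP : Gr M m P) : Kset M m P := by
  obtain ⟨hPs, hPP, htr⟩ := hP
  have hQs : (1 - P).IsSymm := isSymm_one.sub hPs
  have hQQ : (1 - P) * (1 - P) = 1 - P := by
    rw [sub_mul, mul_sub, mul_sub, hPP]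
    simp
  exact ⟨posSemidef_of_isSymm_of_mul_self hPs hPP, posSemidef_of_isSymm_of_mul_self hQs hQQ, htr⟩

lemma convex_Kset : Convex ℝ {D : Matrix (Fin M) (Fin M) ℝ | Kset M m D} := by
  intro D hD D' hD' a b ha hb hab
  have hone : 1 - (a • D + b • D') = a • (1 - D) + b • (1 - D') := by
    nth_rewrite 1 [← one_smul ℝ (1 : Matrix (Fin M) (Fin M) ℝ), ← hab]
    module
  refine ⟨(hD.1.smul ha).add (hD'.1.smul hb), ?_, ?_⟩
  · rw [hone]
    exact (hD.2.1.smul ha).add (hD'.2.1.smul hb)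
  · rw [trace_add, trace_smul, trace_smul, hD.2.2, hD'.2.2, smul_eq_mul, smul_eq_mul, ← add_mul,
      hab, one_mul]

lemma Kset.conj {D U : Matrix (Fin M) (Fin M) ℝ} (hD : Kset M m D) (hU : U * Uᵀ = 1) :
    Kset M m (Uᵀ * D * U) := by
  have hUtU : Uᵀ * U = 1 := mul_eq_one_comm.mp hU
  have hone : 1 - Uᵀ * D * U = Uᵀ * (1 - D) * U := by
    rw [Matrix.mul_sub, Matrix.sub_mul, Matrix.mul_one, hUtU]
  refine ⟨?_, ?_, ?_⟩
  · simpa using hD.1.conjTranspose_mul_mul_same U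
  · simpa [hone] using hD.2.1.conjTranspose_mul_mul_same U
  · rw [trace_mul_cycle, hU, Matrix.one_mul, hD.2.2]

end ConvexHull

section Sublevel

variable {ι : Type*}

/-- The diagonal of the spectral projector `1_{(−∞,t]}(diagonal μ)`. -/
def sublevelIndicator (μ : ι → ℝ) (t : ℝ) (i : ι) : ℝ := if μ i ≤ t then 1 else 0

variable {μ d : ι → ℝ} {t : ℝ}

lemma mul_sub_sublevelIndicator_nonneg (hd0 : ∀ i, 0 ≤ d i) (hd1 : ∀ i, d i ≤ 1) (i : ι) :
    0 ≤ (μ i - t) * (d i - sublevelIndicator μ t i) := by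
  unfold sublevelIndicator
  split_ifs with h
  · exact mul_nonneg_of_nonpos_of_nonpos (by linarith) (by linarith [hd1 i])
  · exact mul_nonneg (by linarith) (by linarith [hd0 i])

variable [Fintype ι]

lemma sum_mul_sub_sum_mul_sublevelIndicator
    (hsum : ∑ i, d i = ∑ i, sublevelIndicator μ t i) :
    ∑ i, μ i * d i - ∑ i, μ i * sublevelIndicator μ t i =
      ∑ i, (μ i - t) * (d i - sublevelIndicator μ t i) := by
  have hshift : ∑ i, t * (d i - sublevelIndicator μ t i) = 0 := by
    rw [← Finset.mul_sum, Finset.sum_sub_distrib, hsum, sub_self, mul_zero]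
  have hterm : ∀ i, (μ i - t) * (d i - sublevelIndicator μ t i) =
      (μ i * d i - μ i * sublevelIndicator μ t i) - t * (d i - sublevelIndicator μ t i) := by
    intro i
    ring
  rw [Finset.sum_congr rfl fun i _ ↦ hterm i, Finset.sum_sub_distrib, hshift, sub_zero,
    Finset.sum_sub_distrib]

lemma sum_mul_sublevelIndicator_le (hd0 : ∀ i, 0 ≤ d i) (hd1 : ∀ i, d i ≤ 1)
    (hsum : ∑ i, d i = ∑ i, sublevelIndicator μ t i) :
    ∑ i, μ i * sublevelIndicator μ t i ≤ ∑ i, μ i * d i := by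
  have := Finset.sum_nonneg fun i (_ : i ∈ Finset.univ) ↦
    mul_sub_sublevelIndicator_nonneg (μ := μ) (t := t) hd0 hd1 i
  rw [← sum_mul_sub_sum_mul_sublevelIndicator hsum] at this
  linarith

lemma eq_sublevelIndicator_of_sum_mul_eq (hd0 : ∀ i, 0 ≤ d i) (hd1 : ∀ i, d i ≤ 1)
    (hsum : ∑ i, d i = ∑ i, sublevelIndicator μ t i)
    (heq : ∑ i, μ i * d i = ∑ i, μ i * sublevelIndicator μ t i) :
    d = sublevelIndicator μ t := by
  have hterms := (Finset.sum_eq_zero_iff_of_nonneg fun i _ ↦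
    mul_sub_sublevelIndicator_nonneg (μ := μ) (t := t) hd0 hd1 i).mp
    (by rw [← sum_mul_sub_sum_mul_sublevelIndicator hsum, heq, sub_self])
  -- above the level the weights vanish, so below it they must saturate to make up the trace
  have hdefect_nonneg : ∀ i, 0 ≤ sublevelIndicator μ t i - d i := by
    intro i
    unfold sublevelIndicator
    split_ifs with h
    · linarith [hd1 i]
    · have hi := hterms i (Finset.mem_univ i)
      simp only [sublevelIndicator, if_neg h, sub_zero] at hi
      rcases mul_eq_zero.mp hi with hμ | hd
      · exact absurd (sub_eq_zero.mp hμ) (by linarith [not_le.mp h])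
      · rw [hd, sub_zero]
  have hzero := (Finset.sum_eq_zero_iff_of_nonneg fun i _ ↦ hdefect_nonneg i).mp
    (by rw [Finset.sum_sub_distrib, hsum, sub_self])
  funext i
  linarith [hzero i (Finset.mem_univ i)]

end Sublevel

lemma eq_diagonal_of_posSemidef_of_diag {ι : Type*} [Fintype ι] [DecidableEq ι]
    {D : Matrix ι ι ℝ} (hD0 : D.PosSemidef) (hD1 : (1 - D).PosSemidef) {e : ι → ℝ}
    (he : ∀ i, e i = 0 ∨ e i = 1) (hdiag : ∀ i, D i i = e i) : D = diagonal e := by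
  have hquad : ∀ (S : Matrix ι ι ℝ) j, star (Pi.single j 1 : ι → ℝ) ⬝ᵥ S *ᵥ Pi.single j 1 =
      S j j := fun S j ↦ by simp
  have hcol : ∀ j, D *ᵥ Pi.single j 1 = e j • Pi.single j 1 := by
    intro j
    rcases he j with h | h
    · rw [h, zero_smul, ← hD0.dotProduct_mulVec_zero_iff, hquad, hdiag, h]
    · have hker := (hD1.dotProduct_mulVec_zero_iff (Pi.single j 1)).mp (by
        rw [hquad, Matrix.sub_apply, one_apply_eq, hdiag, h, sub_self])
      rw [sub_mulVec, one_mulVec, sub_eq_zero] at hker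
      rw [h, one_smul, ← hker]
  ext i j
  rcases eq_or_ne i j with rfl | hij
  · simpa using congrFun (hcol i) i
  · simpa [hij] using congrFun (hcol j) i

namespace IsSpectralProjLE

variable {M : ℕ} {S P : Matrix (Fin M) (Fin M) ℝ} {t c : ℝ} {u : Fin M → ℝ}

lemma mulVec_eq_self_of_eigen (hP : IsSpectralProjLE S t P) (hu : S *ᵥ u = c • u)
    (hc : c ≤ t) : P *ᵥ u = u := by
  obtain ⟨-, hPP, hSP, -, hgt⟩ := hP
  -- as `P` commutes with `S`, the component `u - P u` is again a `c`-eigenvector, lying in `ker P`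
  set v := u - P *ᵥ u with hv
  have hPv : P *ᵥ v = 0 := by rw [hv, mulVec_sub, mulVec_mulVec, hPP, sub_self]
  have hSv : S *ᵥ v = c • v := by
    rw [hv, mulVec_sub, mulVec_mulVec, hSP, ← mulVec_mulVec, hu, mulVec_smul, smul_sub]
  by_contra hne
  have hlt := hgt v (sub_ne_zero.mpr (Ne.symm hne)) hPv
  rw [hSv, smul_dotProduct, smul_eq_mul] at hlt
  have hnonneg : 0 ≤ v ⬝ᵥ v := dotProduct_star_self_nonneg v
  nlinarith

lemma mulVec_eq_zero_of_eigen (hP : IsSpectralProjLE S t P) (hu : S *ᵥ u = c • u)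
    (hc : t < c) : P *ᵥ u = 0 := by
  obtain ⟨-, hPP, hSP, hle, -⟩ := hP
  set w := P *ᵥ u with hw
  have hPw : P *ᵥ w = w := by rw [hw, mulVec_mulVec, hPP]
  have hSw : S *ᵥ w = c • w := by
    rw [hw, mulVec_mulVec, hSP, ← mulVec_mulVec, hu, mulVec_smul]
  have hle := hle w hPw
  rw [hSw, smul_dotProduct, smul_eq_mul] at hle
  have hnonneg : 0 ≤ w ⬝ᵥ w := dotProduct_star_self_nonneg w
  exact dotProduct_self_eq_zero.mp (by nlinarith)

lemma eq_conj_diagonal (hP : IsSpectralProjLE S t P) {U : Matrix (Fin M) (Fin M) ℝ}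
    {μ : Fin M → ℝ} (hU : U * Uᵀ = 1) (hS : S = U * diagonal μ * Uᵀ) :
    P = U * diagonal (sublevelIndicator μ t) * Uᵀ := by
  have hUtU : Uᵀ * U = 1 := mul_eq_one_comm.mp hU
  have hcol : ∀ j, P *ᵥ U.col j = sublevelIndicator μ t j • U.col j := by
    intro j
    have heig : S *ᵥ U.col j = μ j • U.col j := by
      rw [← mulVec_single_one, hS, mulVec_mulVec, Matrix.mul_assoc, Matrix.mul_assoc, hUtU,
        Matrix.mul_one, ← mulVec_mulVec, diagonal_mulVec_single, ← smul_eq_mul,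
        Pi.single_smul', mulVec_smul]
    unfold sublevelIndicator
    split_ifs with h
    · rw [one_smul, hP.mulVec_eq_self_of_eigen heig h]
    · rw [zero_smul, hP.mulVec_eq_zero_of_eigen heig (not_le.mp h)]
  have hPU : P * U = U * diagonal (sublevelIndicator μ t) := by
    ext i j
    have hij := congrFun (hcol j) i
    simp only [mulVec, dotProduct, col_apply, Pi.smul_apply, smul_eq_mul] at hij
    rw [mul_apply, mul_diagonal, hij, mul_comm]
  rw [← hPU, Matrix.mul_assoc, hU, Matrix.mul_one]

end IsSpectralProjLE

section LinearProblem

variable {M m : ℕ}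

lemma sublevelIndicator_of_gap {μ : Fin M → ℝ} (hμ : Monotone μ) {h1 : m - 1 < M} {h2 : m < M}
    (hgap : μ ⟨m - 1, h1⟩ < μ ⟨m, h2⟩) (i : Fin M) :
    sublevelIndicator μ (μ ⟨m - 1, h1⟩) i = if (i : ℕ) < m then 1 else 0 := by
  unfold sublevelIndicator
  by_cases hi : (i : ℕ) < m
  · rw [if_pos hi, if_pos (hμ (Fin.le_def.mpr (by simp; omega)))]
  · rw [if_neg hi, if_neg (not_le.mpr (hgap.trans_le (hμ (Fin.le_def.mpr (by simp; omega)))))]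

lemma sum_sublevelIndicator_of_gap {μ : Fin M → ℝ} (hμ : Monotone μ) {h1 : m - 1 < M}
    {h2 : m < M} (hgap : μ ⟨m - 1, h1⟩ < μ ⟨m, h2⟩) :
    ∑ i, sublevelIndicator μ (μ ⟨m - 1, h1⟩) i = m := by
  simp only [sublevelIndicator_of_gap hμ hgap, Finset.sum_boole, Fin.card_filter_val_lt,
    min_eq_right h2.le]

lemma trace_conj_diagonal {U : Matrix (Fin M) (Fin M) ℝ} (hU : U * Uᵀ = 1) (e : Fin M → ℝ) :
    (U * diagonal e * Uᵀ).trace = ∑ i, e i := by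
  rw [trace_mul_comm, ← Matrix.mul_assoc, mul_eq_one_comm.mp hU, Matrix.one_mul, trace_diagonal]

lemma trace_conj_diagonal_mul (U X : Matrix (Fin M) (Fin M) ℝ) (μ : Fin M → ℝ) :
    (U * diagonal μ * Uᵀ * X).trace = ∑ i, μ i * (Uᵀ * X * U) i i := by
  rw [Matrix.mul_assoc, trace_mul_comm, ← Matrix.mul_assoc]
  simp [trace, mul_diagonal, mul_comm]

lemma trace_conj_diagonal_mul_conj_diagonal {U : Matrix (Fin M) (Fin M) ℝ} (hU : U * Uᵀ = 1)
    (μ e : Fin M → ℝ) :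
    (U * diagonal μ * Uᵀ * (U * diagonal e * Uᵀ)).trace = ∑ i, μ i * e i := by
  have hUtU : Uᵀ * U = 1 := mul_eq_one_comm.mp hU
  have hconj : Uᵀ * (U * diagonal e * Uᵀ) * U = diagonal e := by
    simp only [Matrix.mul_assoc, hUtU, Matrix.mul_one, ← Matrix.mul_assoc Uᵀ U, Matrix.one_mul]
  simp [trace_conj_diagonal_mul, hconj]

lemma Kset.diag_nonneg {D : Matrix (Fin M) (Fin M) ℝ} (hD : Kset M m D) (i : Fin M) :
    0 ≤ D i i :=
  hD.1.diag_nonneg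

lemma Kset.diag_le_one {D : Matrix (Fin M) (Fin M) ℝ} (hD : Kset M m D) (i : Fin M) :
    D i i ≤ 1 := by
  simpa using hD.2.1.diag_nonneg (i := i)

variable {S U D : Matrix (Fin M) (Fin M) ℝ} {μ : Fin M → ℝ} {t : ℝ}

lemma Kset.eq_conj_sublevelProj (hD : Kset M m D) (hU : U * Uᵀ = 1)
    (hS : S = U * diagonal μ * Uᵀ) (hm : ∑ i, sublevelIndicator μ t i = m)
    (hle : (S * D).trace ≤ (S * (U * diagonal (sublevelIndicator μ t) * Uᵀ)).trace) :
    D = U * diagonal (sublevelIndicator μ t) * Uᵀ := by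
  have hD' := hD.conj hU
  have hsum : ∑ i, (Uᵀ * D * U) i i = ∑ i, sublevelIndicator μ t i := hD'.2.2.trans hm.symm
  rw [hS, trace_conj_diagonal_mul_conj_diagonal hU, trace_conj_diagonal_mul] at hle
  have hdiag := eq_sublevelIndicator_of_sum_mul_eq hD'.diag_nonneg hD'.diag_le_one hsum
    (hle.antisymm (sum_mul_sublevelIndicator_le hD'.diag_nonneg hD'.diag_le_one hsum))
  have hconj : Uᵀ * D * U = diagonal (sublevelIndicator μ t) :=
    eq_diagonal_of_posSemidef_of_diag hD'.1 hD'.2.1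
      (fun i ↦ by unfold sublevelIndicator; split_ifs <;> simp) (congrFun hdiag)
  rw [← hconj, ← Matrix.mul_assoc, ← Matrix.mul_assoc, hU, Matrix.one_mul, Matrix.mul_assoc, hU,
    Matrix.mul_one]

end LinearProblem

section Optimality

variable {M m : ℕ} {A B Dstar D : Matrix (Fin M) (Fin M) ℝ}

lemma trace_JtGrad_mul_sub_nonneg (hA : A.IsSymm) (hDstar : Kset M m Dstar)
    (hmin : ∀ D, Kset M m D → Jt A B Dstar ≤ Jt A B D) (hD : Kset M m D) :
    0 ≤ (JtGrad A B Dstar * (D - Dstar)).trace := by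
  set a := (JtGrad A B Dstar * (D - Dstar)).trace
  set q := fnormSq (commut A (D - Dstar))
  -- `J̃` is a quadratic polynomial `J̃(D⋆) + s a + s² q / 4` along the segment towards `D`
  have hsegment : ∀ s ∈ Set.Ioc (0 : ℝ) 1, 0 ≤ a + s * (q / 4) := by
    rintro s ⟨hs0, hs1⟩
    have hJ := hmin _ (convex_Kset.add_smul_sub_mem hDstar hD ⟨hs0.le, hs1⟩)
    rw [Jt_add hA hDstar.isSymm, Matrix.mul_smul, trace_smul, commut_smul_right, fnormSq_smul,
      smul_eq_mul] at hJ
    have hsa : 0 ≤ s * (a + s * (q / 4)) := by linarith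
    exact nonneg_of_mul_nonneg_right hsa hs0
  have hlim : Tendsto (fun s : ℝ ↦ a + s * (q / 4)) (𝓝[>] 0) (𝓝 a) := by
    have hcont : Continuous fun s : ℝ ↦ a + s * (q / 4) := by fun_prop
    simpa using (hcont.tendsto 0).mono_left nhdsWithin_le_nhds
  exact ge_of_tendsto hlim (eventually_of_mem (Ioc_mem_nhdsGT one_pos) hsegment)

lemma trace_JtGrad_mul_sub_nonpos (hA : A.IsSymm) (hDstar : Dstar.IsSymm)
    (hle : Jt A B D ≤ Jt A B Dstar) : (JtGrad A B Dstar * (D - Dstar)).trace ≤ 0 := by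
  have hJ := Jt_add hA hDstar B (D - Dstar)
  rw [add_sub_cancel] at hJ
  linarith [fnormSq_nonneg (commut A (D - Dstar))]

end Optimality

/-- let `D⋆` be a global minimizer of `J̃` over `K`,
`H⋆ = C − (1/2)[[A,D⋆],A]` with eigenvalues `μ₁ ≤ ⋯ ≤ μ_M`. If `μ_m < μ_{m+1}`, then
`P⋆ := 1_{(−∞,μ_m]}(H⋆)` is the unique global minimizer of `J̃` over `K`, belongs to
`Gr(m,ℝ^M)`, and is the unique global minimizer of `J` over `Gr(m,ℝ^M)`. -/
theorem stmt_8 {M m : ℕ} (hM : 2 ≤ M) (hm2 : m ≤ M - 1)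
    (A B : Matrix (Fin M) (Fin M) ℝ) (hA : A.IsSymm)
    (Dstar : Matrix (Fin M) (Fin M) ℝ) (hDstar : Kset M m Dstar)
    (hmin : ∀ D : Matrix (Fin M) (Fin M) ℝ, Kset M m D → Jt A B Dstar ≤ Jt A B D)
    (Hstar : Matrix (Fin M) (Fin M) ℝ)
    (hH : Hstar = (B - (1 / 2 : ℝ) • (A * A)) - (1 / 2 : ℝ) • commut (commut A Dstar) A)
    (μ : Fin M → ℝ) (hμ : sortedEigs Hstar μ)
    (hgap : μ ⟨m - 1, by omega⟩ < μ ⟨m, by omega⟩)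
    (Pstar : Matrix (Fin M) (Fin M) ℝ)
    (hPstar : IsSpectralProjLE Hstar (μ ⟨m - 1, by omega⟩) Pstar) :
    Kset M m Pstar ∧
      (∀ D : Matrix (Fin M) (Fin M) ℝ, Kset M m D → Jt A B Pstar ≤ Jt A B D) ∧
      (∀ D : Matrix (Fin M) (Fin M) ℝ, Kset M m D →
        (∀ D' : Matrix (Fin M) (Fin M) ℝ, Kset M m D' → Jt A B D ≤ Jt A B D') → D = Pstar) ∧
      Gr M m Pstar ∧
      (∀ P : Matrix (Fin M) (Fin M) ℝ, Gr M m P → Jfun A B Pstar ≤ Jfun A B P) ∧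
      (∀ P : Matrix (Fin M) (Fin M) ℝ, Gr M m P →
        (∀ P' : Matrix (Fin M) (Fin M) ℝ, Gr M m P' → Jfun A B P ≤ Jfun A B P') →
        P = Pstar) := by
  obtain ⟨hmono, U, hU, hHU⟩ := hμ
  have hH' : Hstar = JtGrad A B Dstar := hH
  have hPU := hPstar.eq_conj_diagonal hU hHU
  have hcount := sum_sublevelIndicator_of_gap hmono hgap
  have hGr : Gr M m Pstar :=
    ⟨hPstar.1, hPstar.2.1, by rw [hPU, trace_conj_diagonal hU, hcount]⟩
  have hK := hGr.kset
  have hlinear_unique : ∀ D, Kset M m D → (Hstar * D).trace ≤ (Hstar * Pstar).trace → D = Pstar :=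
    fun D hD hle ↦ hPU ▸ hD.eq_conj_sublevelProj hU hHU hcount (hPU ▸ hle)
  have hgrad : 0 ≤ (Hstar * (Pstar - Dstar)).trace :=
    hH' ▸ trace_JtGrad_mul_sub_nonneg hA hDstar hmin hK
  rw [Matrix.mul_sub, trace_sub, sub_nonneg] at hgrad
  obtain rfl : Dstar = Pstar := hlinear_unique Dstar hDstar hgrad
  have hmin_uniq : ∀ D, Kset M m D →
      (∀ D', Kset M m D' → Jt A B D ≤ Jt A B D') → D = Dstar := by
    intro D hD hDmin
    have hle := trace_JtGrad_mul_sub_nonpos hA hDstar.isSymm (hDmin Dstar hDstar)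
    rw [← hH', Matrix.mul_sub, trace_sub, sub_nonpos] at hle
    exact hlinear_unique D hD hle
  have hJ := fun P (hP : Gr M m P) ↦ Jt_eq_Jfun_of_Gr hA hP B
  refine ⟨hK, hmin, hmin_uniq, hGr, fun P hP ↦ ?_, fun P hP hPmin ↦ ?_⟩
  · simpa only [hJ P hP, hJ Dstar hGr] using hmin P hP.kset
  · refine hmin_uniq P hP.kset fun D hD ↦ le_trans ?_ (hmin D hD)
    simpa only [hJ P hP, hJ Dstar hGr] using hPmin Dstar hGr
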